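/- Let T be a thick tree, let G ≤ Aut(T), and suppose G is k-type-distance-transitive for some k ≥ 1. Then G is (k+1)-type-distance-transitive if and only if for every pair of vertices x, y with d(x, y) = k, the pointwise stabilizer G(x, y) (which automatically fixes the geodesic from x to y pointwise) acts transitively on S_y(x,1). -/

import Mathlib

/-!
In a tree, the distances from a fixed vertex to two adjacent vertices differ by exactly one.
Hence `d(a, b) ≡ d(r, a) + d(r, b) (mod 2)`, which controls types, and every vertex `w ≠ y` has a
unique neighbour closer to `y`.

If `G` is `(k+1)`-type-distance-transitive, an element carrying `(w, y)` to `(w', y)` must fix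
`x`, the unique neighbour of `w'` closer to `y`. Conversely, given `(x, y)` and `(x', y')` at
distance `k + 1`, let `z`, `z'` be the neighbours of `x`, `x'` towards `y`, `y'`. Some `g ∈ G`
carries `(y, z)` to `(y', z')`; then `g x ∈ S_{y'}(z', 1)`, and the stabilizer of `(z', y')`
moves `g x` to `x'`.
-/

/-- The pointwise stabilizer of a set of vertices, inside the full symmetric group. -/
def ptStab {V : Type*} (s : Set V) : Subgroup (Equiv.Perm V) where
  carrier := {g | ∀ v ∈ s, g v = v}
  one_mem' := by intro v _; rfl
  mul_mem' := by
    intro a b ha hb v hv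
    simp only [Set.mem_setOf_eq] at *
    rw [Equiv.Perm.mul_apply, hb v hv, ha v hv]
  inv_mem' := by
    intro a ha v hv
    simp only [Set.mem_setOf_eq] at *
    calc a⁻¹ v = a⁻¹ (a v) := by rw [ha v hv]
      _ = v := a.symm_apply_apply v

/-- `G` consists of automorphisms of the graph `T`. -/
def PreservesAdj {V : Type*} (T : SimpleGraph V) (G : Subgroup (Equiv.Perm V)) : Prop :=
  ∀ g ∈ G, ∀ a b : V, T.Adj a b ↔ T.Adj (g a) (g b)

/-- `G` is `k`-type-distance-transitive. -/
def TypeDistTrans {V : Type*} (T : SimpleGraph V) (G : Subgroup (Equiv.Perm V)) (k : ℕ) : Prop :=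
  ∀ x y x' y' : V, T.dist x y = k → T.dist x' y' = k → Even (T.dist x x') →
    ∃ g ∈ G, g x = x' ∧ g y = y'

/-- The tree is thick: every vertex has at least three neighbours. -/
def Thick {V : Type*} (T : SimpleGraph V) : Prop :=
  ∀ v : V, ∃ a b c : V, T.Adj v a ∧ T.Adj v b ∧ T.Adj v c ∧ a ≠ b ∧ a ≠ c ∧ b ≠ c

namespace SimpleGraph

variable {V W : Type*} {G : SimpleGraph V} {H : SimpleGraph W}

theorem Hom.edist_map_le (f : G →g H) (u v : V) : H.edist (f u) (f v) ≤ G.edist u v := by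
  by_cases huv : G.Reachable u v
  · obtain ⟨p, hp⟩ := huv.exists_walk_length_eq_edist
    rw [← hp, ← Walk.length_map f p]
    exact edist_le _
  · rw [edist_eq_top_of_not_reachable huv]
    exact le_top

theorem Iso.dist_map (f : G ≃g H) (u v : V) : H.dist (f u) (f v) = G.dist u v := by
  have hge : G.edist u v ≤ H.edist (f u) (f v) := by
    simpa using f.symm.toHom.edist_map_le (f u) (f v)
  exact congrArg ENat.toNat (le_antisymm (f.toHom.edist_map_le u v) hge)

theorem Connected.exists_adj_dist_eq (hG : G.Connected) {x y : V} {k : ℕ}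
    (h : G.dist x y = k + 1) : ∃ z, G.Adj x z ∧ G.dist z y = k := by
  obtain ⟨p, hp⟩ := hG.exists_walk_length_eq_dist x y
  have hnil : ¬p.Nil := by
    rw [← Walk.length_eq_zero_iff]
    omega
  refine ⟨p.snd, p.adj_snd hnil, ?_⟩
  have hshort : G.dist p.snd y ≤ k := by
    have := dist_le p.tail
    rw [← Walk.length_tail_add_one hnil] at hp
    omega
  have hlong := hG.dist_triangle (u := x) (v := p.snd) (w := y)
  rw [dist_eq_one_iff_adj.mpr (p.adj_snd hnil)] at hlong
  omega

theorem IsTree.even_length_add_dist_add_dist (hG : G.IsTree) (r : V) {a b : V}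
    (p : G.Walk a b) : Even (p.length + G.dist r a + G.dist r b) := by
  induction p with
  | nil => rw [Walk.length_nil, zero_add]; exact Even.add_self _
  | cons hadj p ih =>
    rw [Walk.length_cons, Nat.even_iff] at *
    have := hG.dist_eq_dist_add_one_of_adj r hadj
    omega

theorem IsTree.even_dist_add_dist_add_dist (hG : G.IsTree) (r a b : V) :
    Even (G.dist a b + G.dist r a + G.dist r b) := by
  obtain ⟨p, hp⟩ := hG.connected.exists_walk_length_eq_dist a b
  simpa [hp] using hG.even_length_add_dist_add_dist r p

theorem IsTree.eq_penultimate_of_adj_of_dist_lt (hG : G.IsTree) {y w x : V} {p : G.Walk y w}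
    (hp : p.length = G.dist y w) (hx : G.Adj w x) (hd : G.dist x y < G.dist w y) :
    x = p.penultimate := by
  classical
  rw [dist_comm (u := x), dist_comm (u := w)] at hd
  obtain ⟨q, hq, hql⟩ := hG.connected.exists_path_of_dist y x
  have hw : w ∉ q.support := fun hw => by
    have := dist_le (q.takeUntil w hw)
    have := q.length_takeUntil_le_length hw
    omega
  have hxp : x ∈ p.support := hG.isAcyclic.mem_support_of_ne_mem_support_of_adj_of_isPath
    (p.isPath_of_length_eq_dist hp) hq hx hw
  exact hG.isAcyclic.eq_penultimate_of_adj_end (p.isPath_of_length_eq_dist hp) hx hxp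

theorem IsTree.eq_of_adj_of_dist_lt (hG : G.IsTree) {y w x x' : V} (hx : G.Adj w x)
    (hx' : G.Adj w x') (hd : G.dist x y < G.dist w y) (hd' : G.dist x' y < G.dist w y) :
    x = x' := by
  obtain ⟨p, hp⟩ := hG.connected.exists_walk_length_eq_dist y w
  rw [hG.eq_penultimate_of_adj_of_dist_lt hp hx hd, hG.eq_penultimate_of_adj_of_dist_lt hp hx' hd']

end SimpleGraph

open SimpleGraph

section TreeAction

variable {V : Type*} {T : SimpleGraph V} {G : Subgroup (Equiv.Perm V)}

def PreservesAdj.toIso (hG : PreservesAdj T G) {g : Equiv.Perm V} (hg : g ∈ G) : T ≃g T :=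
  ⟨g, (hG g hg _ _).symm⟩

theorem PreservesAdj.dist_apply (hG : PreservesAdj T G) {g : Equiv.Perm V} (hg : g ∈ G)
    (a b : V) : T.dist (g a) (g b) = T.dist a b :=
  (hG.toIso hg).dist_map a b

/-- The paper's condition that `G(x, y)` is transitive on `S_y(x, 1)` whenever `d(x, y) = k`. -/
def PairStabilizerTransitive (T : SimpleGraph V) (G : Subgroup (Equiv.Perm V)) (k : ℕ) : Prop :=
  ∀ x y : V, T.dist x y = k →
    ∀ w w' : V, T.Adj x w → T.Adj x w' →
      T.dist w y = T.dist x y + 1 → T.dist w' y = T.dist x y + 1 →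
      ∃ g ∈ G, g x = x ∧ g y = y ∧ g w = w'

theorem pairStabilizerTransitive_of_typeDistTrans_succ (hT : T.IsTree) (hG : PreservesAdj T G)
    {k : ℕ} (h : TypeDistTrans T G (k + 1)) : PairStabilizerTransitive T G k := by
  intro x y hxy w w' hw hw' hdw hdw'
  rw [hxy] at hdw hdw'
  have hww' : Even (T.dist w w') := by
    have := hT.even_dist_add_dist_add_dist x w w'
    rw [dist_eq_one_iff_adj.mpr hw, dist_eq_one_iff_adj.mpr hw', Nat.even_iff] at this
    rw [Nat.even_iff]
    omega
  obtain ⟨g, hg, hgw, hgy⟩ := h w y w' y hdw hdw' hww'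
  have hgx : T.Adj w' (g x) := hgw ▸ (hG g hg w x).mp hw.symm
  have hgxy : T.dist (g x) y = k := by rw [← hgy, hG.dist_apply hg, hxy]
  exact ⟨g, hg, hT.eq_of_adj_of_dist_lt (y := y) hgx hw'.symm (by omega) (by omega), hgy, hgw⟩

theorem typeDistTrans_succ_of_pairStabilizerTransitive (hT : T.IsTree) (hG : PreservesAdj T G)
    {k : ℕ} (hk : TypeDistTrans T G k) (h : PairStabilizerTransitive T G k) :
    TypeDistTrans T G (k + 1) := by
  intro x y x' y' hxy hx'y' hxx'
  obtain ⟨z, hz, hzy⟩ := hT.connected.exists_adj_dist_eq hxy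
  obtain ⟨z', hz', hz'y'⟩ := hT.connected.exists_adj_dist_eq hx'y'
  have hyy' : Even (T.dist y y') := by
    have hy := hT.even_dist_add_dist_add_dist x y y'
    have hy' := hT.even_dist_add_dist_add_dist x x' y'
    rw [hxy] at hy
    rw [hx'y'] at hy'
    rw [Nat.even_iff] at hy hy' hxx' ⊢
    omega
  obtain ⟨g, hg, hgy, hgz⟩ :=
    hk y z y' z' (SimpleGraph.dist_comm.trans hzy) (SimpleGraph.dist_comm.trans hz'y') hyy'
  have hgx : T.Adj z' (g x) := hgz ▸ (hG g hg z x).mp hz.symm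
  have hgxy' : T.dist (g x) y' = k + 1 := by rw [← hgy, hG.dist_apply hg, hxy]
  obtain ⟨f, hf, -, hfy', hfx⟩ := h z' y' hz'y' (g x) x' hgx hz'.symm
    (by rw [hgxy', hz'y']) (by rw [hx'y', hz'y'])
  exact ⟨f * g, mul_mem hf hg, hfx, by rw [Equiv.Perm.mul_apply, hgy, hfy']⟩

end TreeAction

theorem succ_type_distance_transitive_iff_stabilizer_transitive_general
    {V : Type*} (T : SimpleGraph V) (hconn : T.Connected) (hacyc : T.IsAcyclic)
    (G : Subgroup (Equiv.Perm V)) (hG : PreservesAdj T G)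
    (k : ℕ) (hTDT : TypeDistTrans T G k) :
    TypeDistTrans T G (k + 1) ↔
      ∀ x y : V, T.dist x y = k →
        ∀ w w' : V, T.Adj x w → T.Adj x w' →
          T.dist w y = T.dist x y + 1 → T.dist w' y = T.dist x y + 1 →
          ∃ g ∈ G, g x = x ∧ g y = y ∧ g w = w' :=
  ⟨pairStabilizerTransitive_of_typeDistTrans_succ ⟨hconn, hacyc⟩ hG,
    typeDistTrans_succ_of_pairStabilizerTransitive ⟨hconn, hacyc⟩ hG hTDT⟩

/-- If `G` is `k`-type-distance-transitive on the thick tree `T`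
(`k ≥ 1`), then `G` is `(k+1)`-type-distance-transitive if and only if for all vertices
`x, y` with `d(x,y) = k`, the pointwise stabilizer `G(x,y)` acts transitively on
`S_y(x,1)`, the set of neighbours `w` of `x` with `d(w,y) = d(x,y) + 1`. -/
theorem succ_type_distance_transitive_iff_stabilizer_transitive
    {V : Type*} (T : SimpleGraph V) (hconn : T.Connected) (hacyc : T.IsAcyclic)
    (hthick : Thick T)
    (G : Subgroup (Equiv.Perm V)) (hG : PreservesAdj T G)
    (k : ℕ) (hk : 1 ≤ k) (hTDT : TypeDistTrans T G k) :
    TypeDistTrans T G (k + 1) ↔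
      ∀ x y : V, T.dist x y = k →
        ∀ w w' : V, T.Adj x w → T.Adj x w' →
          T.dist w y = T.dist x y + 1 → T.dist w' y = T.dist x y + 1 →
          ∃ g ∈ G, g x = x ∧ g y = y ∧ g w = w' :=
  succ_type_distance_transitive_iff_stabilizer_transitive_general T hconn hacyc G hG k hTDT
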